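/- Fix an integer N ≥ 2 and a real number q with 0 < q < 1. Let s ∈ ℂ \ {0} and let m ≥ 1 be an integer. Then for every x ∈ ℂ \ {0} at which all theta factors occurring on either side are nonzero, F_m(q^{-N} s^{-m} x ; s) = F_{-m}(x ; s)^{-1}. Equivalently, if s, t ∈ ℂ \ {0} satisfy the surface condition s^m t^n = q^{-N} for some integer n, then F_m(t^n x ; s) = F_{-m}(x ; s)^{-1}. -/

import Mathlib

/-!
The Jacobi theta function is quasi-periodic, `Θ_p(p w) = -w⁻¹ Θ_p(w)`. With `p = q^{2N}`, the
substitution `z ↦ q^{-N} z` sends `z² ↦ p⁻¹ z²` and `z⁻² ↦ p z⁻²`, and the resulting scalar factors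
are the same (`p⁻¹ z⁴`) in the numerator and the denominator of `U`, so `U(q^{-N} z) = U(z)`.
Hence `q^{-N}` can be dropped from the argument of `F_m`, and reading the product
`F_m(s^{-m} x) = ∏_{k<m} U(s^{k-m} x)` backwards gives `∏_{k=1}^{m} U(s^{-k} x) = F_{-m}(x)⁻¹`.
-/

/-- Infinite `q`-Pochhammer symbol `(z;p)_∞ = ∏_{j≥0} (1 − z pʲ)`. -/
noncomputable def qPoch (z p : ℂ) : ℂ := ∏' j : ℕ, (1 - z * p ^ j)

/-- Jacobi Θ function `Θ_p(z) = (z;p)_∞ (p z⁻¹;p)_∞ (p;p)_∞`. -/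
noncomputable def ThetaF (p z : ℂ) : ℂ := qPoch z p * qPoch (p * z⁻¹) p * qPoch p p

/-- The function
`U(z) = q^{2/N−2} · Θ_{q^{2N}}(q²z²) Θ_{q^{2N}}(q²z⁻²) / (Θ_{q^{2N}}(z²) Θ_{q^{2N}}(z⁻²))`. -/
noncomputable def Ufun (N : ℕ) (q : ℝ) (z : ℂ) : ℂ :=
  ((q ^ ((2 : ℝ) / N - 2) : ℝ) : ℂ) *
    (ThetaF ((q : ℂ) ^ (2 * N)) ((q : ℂ) ^ 2 * z ^ 2) *
      ThetaF ((q : ℂ) ^ (2 * N)) ((q : ℂ) ^ 2 * z⁻¹ ^ 2)) /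
    (ThetaF ((q : ℂ) ^ (2 * N)) (z ^ 2) * ThetaF ((q : ℂ) ^ (2 * N)) (z⁻¹ ^ 2))

/-- All four theta factors occurring in `U(z)` are nonzero. -/
def thetaReg (N : ℕ) (q : ℝ) (z : ℂ) : Prop :=
  ThetaF ((q : ℂ) ^ (2 * N)) ((q : ℂ) ^ 2 * z ^ 2) ≠ 0 ∧
  ThetaF ((q : ℂ) ^ (2 * N)) ((q : ℂ) ^ 2 * z⁻¹ ^ 2) ≠ 0 ∧
  ThetaF ((q : ℂ) ^ (2 * N)) (z ^ 2) ≠ 0 ∧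
  ThetaF ((q : ℂ) ^ (2 * N)) (z⁻¹ ^ 2) ≠ 0

/-- `F_a(x;s) = ∏_{k=0}^{a−1} U(sᵏx)` for `a > 0`, `F₀ = 1`, and
`F_a(x;s) = ∏_{k=1}^{−a} U(s⁻ᵏx)⁻¹` for `a < 0`. -/
noncomputable def Ffun (N : ℕ) (q : ℝ) (s x : ℂ) (a : ℤ) : ℂ :=
  if 0 < a then ∏ k ∈ Finset.range a.toNat, Ufun N q (s ^ (k : ℕ) * x)
  else ∏ k ∈ Finset.range (-a).toNat, (Ufun N q (s ^ (-(k : ℤ) - 1) * x))⁻¹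

/-- The structure function
`Y_{m,n}(x;s,t) = F_n(x;t) F_{−n}(x;t) / (F_m(x;s) F_{−m}(x;s))`. -/
noncomputable def Yfun (N : ℕ) (q : ℝ) (s t x : ℂ) (m n : ℤ) : ℂ :=
  Ffun N q t x n * Ffun N q t x (-n) / (Ffun N q s x m * Ffun N q s x (-m))

open Finset

lemma multipliable_qPoch (z : ℂ) {p : ℂ} (hp : ‖p‖ < 1) :
    Multipliable fun j : ℕ => 1 - z * p ^ j := by
  have hsum : Summable fun j : ℕ => -(z * p ^ j) :=
    ((summable_geometric_of_norm_lt_one hp).mul_left z).neg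
  simpa only [sub_eq_add_neg] using Complex.multipliable_one_add_of_summable hsum

lemma qPoch_eq_one_sub_mul (z : ℂ) {p : ℂ} (hp : ‖p‖ < 1) :
    qPoch z p = (1 - z) * qPoch (p * z) p := by
  have htail : Multipliable fun j : ℕ => 1 - z * p ^ (j + 1) :=
    (multipliable_qPoch (p * z) hp).congr fun j => by ring
  rw [qPoch, tprod_eq_zero_mul' (f := fun j => 1 - z * p ^ j) htail, pow_zero, mul_one, qPoch]
  congr 1
  exact tprod_congr fun j => by ring

section ThetaF

variable {p : ℂ} (hp : ‖p‖ < 1) (hp0 : p ≠ 0)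
include hp hp0

lemma ThetaF_mul {w : ℂ} (hw : w ≠ 0) : ThetaF p (p * w) = -w⁻¹ * ThetaF p w := by
  have hinv : p * (p * w)⁻¹ = w⁻¹ := by field_simp
  rw [ThetaF, ThetaF, hinv, qPoch_eq_one_sub_mul w hp, qPoch_eq_one_sub_mul w⁻¹ hp,
    show (1 : ℂ) - w⁻¹ = -w⁻¹ * (1 - w) by field_simp; ring]
  ring

lemma ThetaF_inv_mul {w : ℂ} (hw : w ≠ 0) : ThetaF p (p⁻¹ * w) = -(p⁻¹ * w) * ThetaF p w := by
  have h := ThetaF_mul hp hp0 (mul_ne_zero (inv_ne_zero hp0) hw)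
  rw [mul_inv_cancel_left₀ hp0] at h
  rw [h]
  field_simp

lemma ThetaF_inv_mul_mul_ThetaF_mul {a b : ℂ} (ha : a ≠ 0) (hb : b ≠ 0) :
    ThetaF p (p⁻¹ * a) * ThetaF p (p * b) = p⁻¹ * a / b * (ThetaF p a * ThetaF p b) := by
  rw [ThetaF_inv_mul hp hp0 ha, ThetaF_mul hp hp0 hb]
  ring

end ThetaF

lemma Ufun_qpow_neg_mul (N : ℕ) {q : ℝ} (hq0 : 0 < q) (hq1 : q < 1) (z : ℂ) :
    Ufun N q ((q : ℂ) ^ (-(N : ℤ)) * z) = Ufun N q z := by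
  rcases Nat.eq_zero_or_pos N with rfl | hN
  · simp
  rcases eq_or_ne z 0 with rfl | hz
  · simp
  set p : ℂ := (q : ℂ) ^ (2 * N)
  have hq : (q : ℂ) ≠ 0 := Complex.ofReal_ne_zero.mpr hq0.ne'
  have hp0 : p ≠ 0 := pow_ne_zero _ hq
  have hp : ‖p‖ < 1 := by
    rw [norm_pow, Complex.norm_real, Real.norm_of_nonneg hq0.le]
    exact pow_lt_one₀ hq0.le hq1 (by omega)
  have hsq : ((q : ℂ) ^ (-(N : ℤ))) ^ 2 = p⁻¹ := by
    rw [zpow_neg, zpow_natCast, inv_pow, ← pow_mul, mul_comm]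
  have hz2 : z ^ 2 ≠ 0 := pow_ne_zero _ hz
  have hzi2 : z⁻¹ ^ 2 ≠ 0 := pow_ne_zero _ (inv_ne_zero hz)
  have hq2 : (q : ℂ) ^ 2 ≠ 0 := pow_ne_zero _ hq
  have hscale : p⁻¹ * (q ^ 2 * z ^ 2) / (q ^ 2 * z⁻¹ ^ 2) = p⁻¹ * z ^ 2 / z⁻¹ ^ 2 := by
    field_simp
  rw [Ufun, Ufun, mul_pow, mul_inv, mul_pow, inv_pow ((q : ℂ) ^ _), hsq, inv_inv,
    mul_left_comm _ p⁻¹, mul_left_comm _ p,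
    ThetaF_inv_mul_mul_ThetaF_mul hp hp0 (mul_ne_zero hq2 hz2) (mul_ne_zero hq2 hzi2),
    ThetaF_inv_mul_mul_ThetaF_mul hp hp0 hz2 hzi2, hscale, mul_div_assoc,
    mul_div_mul_left _ _ (by simp [hp0, hz]), ← mul_div_assoc]

section Ffun

variable (N : ℕ) (q : ℝ) (s x : ℂ)

lemma Ffun_natCast (n : ℕ) : Ffun N q s x n = ∏ k ∈ range n, Ufun N q (s ^ k * x) := by
  rcases Nat.eq_zero_or_pos n with rfl | hn
  · simp [Ffun]
  · simp [Ffun, hn]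

lemma Ffun_neg_natCast (n : ℕ) :
    Ffun N q s x (-n) = ∏ k ∈ range n, (Ufun N q (s ^ (-(k : ℤ) - 1) * x))⁻¹ := by
  simp [Ffun]

lemma Ffun_qpow_neg_mul (hq0 : 0 < q) (hq1 : q < 1) (a : ℤ) :
    Ffun N q s ((q : ℂ) ^ (-(N : ℤ)) * x) a = Ffun N q s x a := by
  simp only [Ffun, mul_left_comm _ ((q : ℂ) ^ (-(N : ℤ))) x, Ufun_qpow_neg_mul N hq0 hq1]

lemma Ffun_natCast_zpow_neg_mul (n : ℕ) :
    Ffun N q s (s ^ (-(n : ℤ)) * x) n = (Ffun N q s x (-n))⁻¹ := by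
  rw [Ffun_natCast, Ffun_neg_natCast, prod_inv_distrib, inv_inv,
    ← prod_range_reflect (fun k => Ufun N q (s ^ k * (s ^ (-(n : ℤ)) * x)))]
  refine prod_congr rfl fun k hk => ?_
  have hkn : k < n := mem_range.mp hk
  have hexp : s ^ (n - 1 - k) * s ^ (-(n : ℤ)) = s ^ (-(k : ℤ) - 1) := by
    rw [← zpow_natCast, ← zpow_add' (Or.inr (Or.inl (by omega)))]
    congr 1
    omega
  rw [← mul_assoc, hexp]

end Ffun

theorem Ffun_shift_inv_general (N : ℕ) (q : ℝ) (hq0 : 0 < q) (hq1 : q < 1)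
    (s : ℂ) (m : ℤ) (hm : 1 ≤ m) (x : ℂ) :
    Ffun N q s ((q : ℂ) ^ (-(N : ℤ)) * s ^ (-m) * x) m = (Ffun N q s x (-m))⁻¹ := by
  lift m to ℕ using by omega
  rw [mul_assoc, Ffun_qpow_neg_mul N q s _ hq0 hq1, Ffun_natCast_zpow_neg_mul]

/-- On the surface `s^m t^n = q^{−N}`, one has `F_m(q^{−N} s^{−m} x ; s) = F_{−m}(x;s)⁻¹`
(equivalently `F_m(tⁿ x; s) = F_{−m}(x;s)⁻¹`), at every nonzero point where all theta
factors occurring on either side are nonzero. -/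
theorem Ffun_shift_inv (N : ℕ) (hN : 2 ≤ N) (q : ℝ) (hq0 : 0 < q) (hq1 : q < 1)
    (s : ℂ) (hs : s ≠ 0) (m : ℤ) (hm : 1 ≤ m) (x : ℂ) (hx : x ≠ 0)
    (hreg : ∀ k ∈ Finset.range m.toNat,
      thetaReg N q (s ^ (k : ℤ) * ((q : ℂ) ^ (-(N : ℤ)) * s ^ (-m) * x)))
    (hreg' : ∀ k ∈ Finset.range m.toNat, thetaReg N q (s ^ (-(k : ℤ) - 1) * x)) :
    Ffun N q s ((q : ℂ) ^ (-(N : ℤ)) * s ^ (-m) * x) m = (Ffun N q s x (-m))⁻¹ :=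
  Ffun_shift_inv_general N q hq0 hq1 s m hm x
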